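/- arXiv:1909.07360 — 3 statements merged into one kernel-verified Lean document; each statement's English description precedes it below -/
import Mathlib

section
/- Let G be the subgroup of SL(2,ℤ) generated by the squares of the transvections along (1,0) and (0,1), i.e., G = ⟨[[1,2],[0,1]], [[1,0],[-2,1]]⟩. Then for every primitive vector (a,b) ∈ ℤ² with a+b odd, the square of the transvection along (a,b) lies in G. -/
/-!
Conjugating a transvection by `g ∈ SL(2,ℤ)` gives the transvection along `g c`, so the set of
`c` with `T_c² ∈ G` is stable under `c ↦ A^{±1} c` and `c ↦ B^{±1} c`, that is under
`(a, b) ↦ (a ± 2b, b)` and `(a, b) ↦ (a, b ∓ 2a)`. When `a + b` is odd, `|a| ≠ |b|`, so as long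
as both coordinates are nonzero one of these moves strictly decreases `|a| + |b|`. For a coprime
pair this Euclidean descent ends at `(±1, 0)` or `(0, ±1)`, where `T_c² = A` or `T_c² = B`.
-/

/-- The transvection (Dehn twist matrix) along `c = (c₁, c₂)`. -/
def transvection (c : ℤ × ℤ) : Matrix.SpecialLinearGroup (Fin 2) ℤ :=
  ⟨!![1 - c.1 * c.2, c.1 ^ 2; -c.2 ^ 2, 1 + c.1 * c.2], by
    rw [Matrix.det_fin_two_of]; ring⟩

theorem Int.induction_on_isCoprime_of_odd_add {P : ℤ → ℤ → Prop} (h10 : P 1 0) (h01 : P 0 1)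
    (hneg : ∀ a b, P a b → P (-a) (-b))
    (hfst : ∀ a b, P (a + 2 * b) b ↔ P a b) (hsnd : ∀ a b, P a (b - 2 * a) ↔ P a b) :
    ∀ a b, IsCoprime a b → Odd (a + b) → P a b := by
  have hfst' (a b : ℤ) : P (a - 2 * b) b ↔ P a b := by simpa using (hfst (a - 2 * b) b).symm
  have hsnd' (a b : ℤ) : P a (b + 2 * a) ↔ P a b := by simpa using (hsnd a (b + 2 * a)).symm
  intro a b
  induction hn : a.natAbs + b.natAbs using Nat.strong_induction_on generalizing a b with
  | _ n ih =>
  have descend (a' b' : ℤ) (h : a'.natAbs + b'.natAbs < n) (hcop : IsCoprime a' b')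
      (hodd : Odd (a' + b')) : P a' b' := ih _ h a' b' rfl hcop hodd
  intro hcop hodd
  rw [Int.odd_iff] at hodd
  rcases eq_or_ne b 0 with rfl | hb
  · obtain rfl | rfl := Int.isUnit_iff.mp (isCoprime_zero_right.mp hcop)
    exacts [h10, by simpa using hneg _ _ h10]
  rcases eq_or_ne a 0 with rfl | ha
  · obtain rfl | rfl := Int.isUnit_iff.mp (isCoprime_zero_left.mp hcop)
    exacts [h01, by simpa using hneg _ _ h01]
  rcases lt_or_gt_of_ne (a := a.natAbs) (b := b.natAbs) (by omega) with hlt | hlt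
  · rcases (by omega : (b - 2 * a).natAbs < b.natAbs ∨ (b + 2 * a).natAbs < b.natAbs) with h | h
    · exact (hsnd a b).mp (descend _ _ (by omega) (by simpa) (by rw [Int.odd_iff]; omega))
    · exact (hsnd' a b).mp (descend _ _ (by omega) (by simpa) (by rw [Int.odd_iff]; omega))
  · rcases (by omega : (a + 2 * b).natAbs < a.natAbs ∨ (a - 2 * b).natAbs < a.natAbs) with h | h
    · exact (hfst a b).mp (descend _ _ (by omega) (by simpa) (by rw [Int.odd_iff]; omega))
    · exact (hfst' a b).mp (descend _ _ (by omega) (by simpa) (by rw [Int.odd_iff]; omega))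

theorem Subgroup.conj_mem_iff_of_mem {G : Type*} [Group G] {H : Subgroup G} {g x : G}
    (hg : g ∈ H) : g * x * g⁻¹ ∈ H ↔ x ∈ H := by
  rw [mul_mem_cancel_right (inv_mem hg), mul_mem_cancel_left hg]

@[simp]
theorem coe_transvection (c : ℤ × ℤ) :
    (transvection c : Matrix (Fin 2) (Fin 2) ℤ) =
      !![1 - c.1 * c.2, c.1 ^ 2; -c.2 ^ 2, 1 + c.1 * c.2] :=
  rfl

theorem transvection_neg (c : ℤ × ℤ) : transvection (-c) = transvection c := by
  ext i j; fin_cases i <;> fin_cases j <;> simp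

theorem mul_transvection (g : Matrix.SpecialLinearGroup (Fin 2) ℤ) (c : ℤ × ℤ) :
    g * transvection c =
      transvection (g 0 0 * c.1 + g 0 1 * c.2, g 1 0 * c.1 + g 1 1 * c.2) * g := by
  have hdet : g 0 0 * g 1 1 - g 0 1 * g 1 0 = 1 := by
    rw [← Matrix.det_fin_two]; exact g.det_coe
  -- entry `(i, j)` of the two sides differs by `(det g - 1) ⟨c, e_j⟩ (g c)_i`
  ext i j
  fin_cases i <;> fin_cases j <;> simp [Matrix.mul_apply, Fin.sum_univ_two]
  · linear_combination c.2 * (g 0 0 * c.1 + g 0 1 * c.2) * hdet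
  · linear_combination -c.1 * (g 0 0 * c.1 + g 0 1 * c.2) * hdet
  · linear_combination c.2 * (g 1 0 * c.1 + g 1 1 * c.2) * hdet
  · linear_combination -c.1 * (g 1 0 * c.1 + g 1 1 * c.2) * hdet

theorem transvection_conj (g : Matrix.SpecialLinearGroup (Fin 2) ℤ) (c : ℤ × ℤ) :
    g * transvection c * g⁻¹ =
      transvection (g 0 0 * c.1 + g 0 1 * c.2, g 1 0 * c.1 + g 1 1 * c.2) := by
  rw [mul_transvection, mul_inv_cancel_right]

theorem transvection_sq_mem_iff {H : Subgroup (Matrix.SpecialLinearGroup (Fin 2) ℤ)}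
    {g : Matrix.SpecialLinearGroup (Fin 2) ℤ} (hg : g ∈ H) (c : ℤ × ℤ) :
    transvection (g 0 0 * c.1 + g 0 1 * c.2, g 1 0 * c.1 + g 1 1 * c.2) ^ 2 ∈ H ↔
      transvection c ^ 2 ∈ H := by
  rw [← transvection_conj, conj_pow, Subgroup.conj_mem_iff_of_mem hg]

/-- Claim 7.4 (inclusion): every square of a transvection along a primitive vector
`(a,b)` with `a + b` odd lies in `⟨T_{(1,0)}², T_{(0,1)}²⟩ = ⟨[[1,2],[0,1]], [[1,0],[-2,1]]⟩`. -/
theorem stmt_6 (A B : Matrix.SpecialLinearGroup (Fin 2) ℤ)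
    (hA : (A : Matrix (Fin 2) (Fin 2) ℤ) = !![1, 2; 0, 1])
    (hB : (B : Matrix (Fin 2) (Fin 2) ℤ) = !![1, 0; -2, 1]) :
    ∀ a b : ℤ, IsCoprime a b → Odd (a + b) →
      (transvection (a, b)) ^ 2 ∈ Subgroup.closure {A, B} := by
  have hAH : A ∈ Subgroup.closure {A, B} := Subgroup.subset_closure (by simp)
  have hBH : B ∈ Subgroup.closure {A, B} := Subgroup.subset_closure (by simp)
  have hT10 : transvection (1, 0) ^ 2 = A := by
    ext i j; fin_cases i <;> fin_cases j <;> simp [sq, hA]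
  have hT01 : transvection (0, 1) ^ 2 = B := by
    ext i j; fin_cases i <;> fin_cases j <;> simp [sq, hB]
  refine Int.induction_on_isCoprime_of_odd_add (hT10 ▸ hAH) (hT01 ▸ hBH) ?_ ?_ ?_
  · intro a b h
    rwa [← Prod.neg_mk, transvection_neg]
  · intro a b
    simpa [hA] using transvection_sq_mem_iff hAH (a, b)
  · intro a b
    simpa [hB, neg_add_eq_sub] using transvection_sq_mem_iff hBH (a, b)
end

section
/- For every s ≥ 4, the family of transvection powers {T_{(k,1)}^s : k ∈ ℤ} along the primitive vectors (k,1) freely generates a free subgroup of infinite rank in SL(2,ℤ). -/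
open Cardinal in
theorem FreeGroup.injective_lift_of_ping_pong_zpow {ι : Type*} (hι : 3 ≤ #ι) {G : Type*} [Group G]
    (a : ι → G) {α : Type*} [MulAction G α] (X : ι → Set α) (hXnonempty : ∀ i, (X i).Nonempty)
    (hXdisj : Pairwise (Function.onFun Disjoint X))
    (hpp : Pairwise fun i j => ∀ n : ℤ, n ≠ 0 → Set.MapsTo (a i ^ n • ·) (X j) (X i)) :
    Function.Injective (FreeGroup.lift a) := by
  have : Nontrivial ι := one_lt_iff_nontrivial.mp ((by norm_num : (1 : Cardinal) < 3).trans_le hι)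
  have hlift : FreeGroup.lift a =
      (Monoid.CoprodI.lift fun i => FreeGroup.lift fun _ => a i).comp
        freeGroupEquivCoprodI.toMonoidHom := by
    ext i; simp
  rw [hlift, MonoidHom.coe_comp]
  refine Function.Injective.comp ?_ freeGroupEquivCoprodI.injective
  refine Monoid.CoprodI.lift_injective_of_ping_pong _ (Or.inl hι) X hXnonempty hXdisj ?_
  intro i j hij
  refine FreeGroup.freeGroupUnitEquivInt.forall_congr_left.mpr fun n hn => ?_
  simp only [FreeGroup.freeGroupUnitEquivInt, Equiv.coe_fn_symm_mk, map_zpow,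
    FreeGroup.lift_apply_of] at hn ⊢
  exact (hpp hij n (by rintro rfl; simp at hn)).image_subset

def pairing (c : ℤ × ℤ) (v : Fin 2 → ℤ) : ℤ := c.1 * v 1 - c.2 * v 0

lemma transvection_smul (c : ℤ × ℤ) (v : Fin 2 → ℤ) :
    transvection c • v = v + pairing c v • ![c.1, c.2] := by
  ext i
  rw [Matrix.SpecialLinearGroup.smul_def, Matrix.smul_eq_mulVec]
  fin_cases i <;> simp [transvection, pairing, Matrix.mulVec_eq_sum] <;> ring

lemma pairing_self (c : ℤ × ℤ) : pairing c ![c.1, c.2] = 0 := by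
  simp [pairing]; ring

lemma transvection_zpow_smul (c : ℤ × ℤ) (m : ℤ) (v : Fin 2 → ℤ) :
    transvection c ^ m • v = v + (m * pairing c v) • ![c.1, c.2] := by
  have hpair (w : Fin 2 → ℤ) (n : ℤ) : pairing c (w + n • ![c.1, c.2]) = pairing c w := by
    simp [pairing]; ring
  induction m using Int.induction_on generalizing v with
  | zero => simp
  | succ n ih => rw [zpow_add_one, mul_smul, transvection_smul, ih, hpair]; module
  | pred n ih =>
    have hinv : (transvection c)⁻¹ • v = v - pairing c v • ![c.1, c.2] := by
      rw [inv_smul_eq_iff, transvection_smul, sub_eq_add_neg, ← neg_smul, hpair]; module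
    rw [zpow_sub_one, mul_smul, hinv, ih, sub_eq_add_neg, ← neg_smul, hpair]; module

lemma pairing_transvection_zpow_smul (w c : ℤ × ℤ) (m : ℤ) (v : Fin 2 → ℤ) :
    pairing w (transvection c ^ m • v) = pairing w v + m * pairing c v * pairing w ![c.1, c.2] := by
  rw [transvection_zpow_smul]; simp [pairing]; ring

lemma pairing_plucker (a b c : ℤ × ℤ) (v : Fin 2 → ℤ) :
    pairing b ![c.1, c.2] * pairing a v =
      pairing a ![c.1, c.2] * pairing b v + pairing b ![a.1, a.2] * pairing c v := by
  simp [pairing]; ring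

lemma abs_add_abs_sub_add_abs_le {d p : ℤ} (hd : d ≠ 0) (hp : p ≠ 0) :
    |d| + |p - d| + |p| ≤ 4 * |d| * |p| := by
  have hd1 : 1 ≤ |d| := Int.one_le_abs hd
  have hp1 : 1 ≤ |p| := Int.one_le_abs hp
  have : |p - d| ≤ |p| + |d| := abs_sub _ _
  nlinarith

lemma abs_lt_abs_add_mul {A B X d p m : ℤ} (hAB : |A| < |B|) (hd : d ≠ 0) (hp : p ≠ 0)
    (hm : 4 ≤ |m|) (hX : p * X = d * A + (p - d) * B) : |B| < |X + m * B * d| := by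
  have htri : |d| + |p - d| + |p| ≤ |m| * |d| * |p| :=
    (abs_add_abs_sub_add_abs_le hd hp).trans (by gcongr)
  have hdA : |d| * |A| < |d| * |B| := mul_lt_mul_of_pos_left hAB (abs_pos.mpr hd)
  have key : |p| * |B| < |p| * |X + m * B * d| :=
    calc |p| * |B| ≤ (|m| * |d| * |p| - |d| - |p - d|) * |B| := by
          gcongr; linarith
      _ < |m| * |d| * |p| * |B| - |d| * |A| - |p - d| * |B| := by linarith
      _ = |m * B * d * p| - |d * A| - |(p - d) * B| := by simp only [abs_mul]; ring
      _ ≤ |d * A + (p - d) * B + m * B * d * p| := by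
          have h := abs_sub (d * A + (p - d) * B + m * B * d * p) (d * A + (p - d) * B)
          rw [add_sub_cancel_left] at h
          linarith [abs_add_le (d * A) ((p - d) * B)]
      _ = |p| * |X + m * B * d| := by rw [← abs_mul, mul_add, hX]; ring_nf
  exact lt_of_mul_lt_mul_left key (abs_nonneg p)

/-- For `v 1 ≠ 0`, `|pairing (k, 1) v| = |v 1| * |k - v 0 / v 1|`: these are the vectors whose
slope `v 0 / v 1` is strictly nearer to `k` than to any other integer. -/
def nearestSet (k : ℤ) : Set (Fin 2 → ℤ) :=
  {v | ∀ i, i ≠ k → |pairing (k, 1) v| < |pairing (i, 1) v|}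

lemma nearestSet_nonempty (k : ℤ) : (nearestSet k).Nonempty :=
  ⟨![k, 1], fun i hi => by simpa [pairing, sub_eq_zero] using hi⟩

lemma pairwise_disjoint_nearestSet : Pairwise (Function.onFun Disjoint nearestSet) :=
  fun k j hkj => Set.disjoint_left.mpr fun _ hk hj => (hk j hkj.symm).asymm (hj k hkj)

lemma transvection_zpow_smul_mem_nearestSet {k j m : ℤ} (hkj : k ≠ j) (hm : 4 ≤ |m|)
    {v : Fin 2 → ℤ} (hv : v ∈ nearestSet j) : transvection (k, 1) ^ m • v ∈ nearestSet k := by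
  intro i hik
  have hk : pairing (k, 1) (transvection (k, 1) ^ m • v) = pairing (k, 1) v := by
    rw [pairing_transvection_zpow_smul, pairing_self, mul_zero, add_zero]
  have hi : pairing (i, 1) (transvection (k, 1) ^ m • v) =
      pairing (i, 1) v + m * pairing (k, 1) v * (i - k) := by
    rw [pairing_transvection_zpow_smul]; simp [pairing]
  have hplucker := pairing_plucker (i, 1) (j, 1) (k, 1) v
  rw [hk, hi]
  refine abs_lt_abs_add_mul (hv k hkj) (sub_ne_zero.mpr hik) (sub_ne_zero.mpr hkj.symm) hm ?_
  simp only [pairing, Matrix.cons_val_zero, Matrix.cons_val_one] at hplucker ⊢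
  linear_combination hplucker

/-- For `s ≥ 4`, the powers `T_{(k,1)}^s`, `k ∈ ℤ`, freely generate a free subgroup
of infinite rank in `SL(2,ℤ)`. -/
theorem stmt_13 (s : ℕ) (hs : 4 ≤ s) :
    Function.Injective (FreeGroup.lift (fun k : ℤ => (transvection (k, 1)) ^ s)) := by
  have hcard : 3 ≤ Cardinal.mk ℤ := by
    rw [Cardinal.mk_int]; exact (Cardinal.natCast_lt_aleph0 (n := 3)).le
  refine FreeGroup.injective_lift_of_ping_pong_zpow hcard _ nearestSet nearestSet_nonempty
    pairwise_disjoint_nearestSet fun k j hkj n hn v hv => ?_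
  rw [← zpow_natCast, ← zpow_mul]
  refine transvection_zpow_smul_mem_nearestSet hkj ?_ hv
  rw [abs_mul, Nat.abs_cast]
  have : 1 ≤ |n| := Int.one_le_abs hn
  nlinarith
end

section
/- Let G be a group acting on a set X, let I be an index set with at least two elements, let {g_i}_{i∈I} ⊆ G and let {X_i}_{i∈I} be pairwise disjoint nonempty subsets of X such that for every nonzero integer p and all distinct i, j ∈ I, g_i^p(X_j) ⊆ X_i. Then the natural homomorphism from the free group on I to G sending the i-th generator to g_i is injective; i.e., {g_i} freely generate a free subgroup of G. -/
/-!
The free group on `I` is the free product of the infinite cyclic groups `FreeGroup Unit ≅ ℤ`,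
one for each `i`, and the hypothesis says exactly that every nontrivial element of the `i`-th
factor maps each `S j`, `j ≠ i`, into `S i`. This is the ping pong situation for free products,
where a reduced word, evaluated on a point of a suitably chosen `S k`, is forced to land in the
`S` of its first letter; the factors are infinite, so even two of them suffice.
-/

open Monoid Cardinal Pointwise Function

namespace FreeGroup

lemma exists_eq_of_unit_zpow (h : FreeGroup Unit) : ∃ n : ℤ, h = of () ^ n :=
  ⟨freeGroupUnitEquivInt h, (freeGroupUnitEquivInt.symm_apply_apply h).symm⟩

variable {ι G : Type*} [Group G]

lemma lift_eq_coprodI_lift_comp (a : ι → G) :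
    lift a = (CoprodI.lift fun i => lift fun _ : Unit => a i).comp
      (freeGroupEquivCoprodI : FreeGroup ι ≃* _).toMonoidHom := by
  ext i
  simp

lemma injective_lift_iff_injective_coprodI_lift (a : ι → G) :
    Injective (lift a) ↔ Injective (CoprodI.lift fun i => lift fun _ : Unit => a i) := by
  rw [lift_eq_coprodI_lift_comp, MonoidHom.coe_comp]
  exact Injective.of_comp_iff' _ (MulEquiv.bijective _)

variable {α : Type*} [MulAction G α]

theorem injective_lift_of_ping_pong_zpow_s19 [Nontrivial ι] (a : ι → G) (X : ι → Set α)
    (hne : ∀ i, (X i).Nonempty) (hdisj : Pairwise (Disjoint on X))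
    (hpp : Pairwise fun i j => ∀ n : ℤ, n ≠ 0 → a i ^ n • X j ⊆ X i) :
    Injective (lift a) := by
  rw [injective_lift_iff_injective_coprodI_lift]
  refine CoprodI.lift_injective_of_ping_pong _ ?_ X hne hdisj ?_
  · inhabit ι
    exact Or.inr ⟨default, natCast_le_aleph0.trans (aleph0_le_mk _)⟩
  · intro i j hij h hh
    obtain ⟨n, rfl⟩ := exists_eq_of_unit_zpow h
    have hn : n ≠ 0 := by
      rintro rfl
      exact hh (zpow_zero _)
    simpa only [map_zpow, lift_apply_of] using hpp hij n hn

end FreeGroup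

/-- The ping pong lemma (possibly infinite index set): if `G` acts on `X`, the sets
`X i` are pairwise disjoint and nonempty, and every nonzero power of `g i` maps `X j`
into `X i` for `i ≠ j`, then the `g i` freely generate a free subgroup of `G`. -/
theorem stmt_19 {G : Type*} [Group G] {X : Type*} [MulAction G X]
    {I : Type*} [Nontrivial I] (g : I → G) (S : I → Set X)
    (hne : ∀ i, (S i).Nonempty)
    (hdisj : ∀ i j, i ≠ j → Disjoint (S i) (S j))
    (hpp : ∀ (p : ℤ), p ≠ 0 → ∀ i j, i ≠ j → ∀ x ∈ S j, (g i ^ p) • x ∈ S i) :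
    Function.Injective (FreeGroup.lift g) :=
  FreeGroup.injective_lift_of_ping_pong_zpow_s19 g S hne (fun i j hij => hdisj i j hij)
    fun i j hij p hp => Set.smul_set_subset_iff.mpr (hpp p hp i j hij)
end
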